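/- For a convex cone C and x ∈ C with minimal face F = face(x,C), the cone of feasible directions satisfies dir(x,C) = C + span F, and the tangent cone satisfies tcone(x,C) = (F^△)*, where F^△ = C* ∩ F^⊥ is the conjugate face. -/

import Mathlib

open Pointwise

/-- `F` is a face of the convex set `C`. -/
def IsFaceOf {M : Type*} [AddCommGroup M] [Module ℝ M] (F C : Set M) : Prop :=
  F ⊆ C ∧ Convex ℝ F ∧ ∀ x ∈ C, ∀ y ∈ C, ∀ t : ℝ, t ∈ Set.Ioo (0 : ℝ) 1 →
    t • x + (1 - t) • y ∈ F → x ∈ F ∧ y ∈ F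

/-- The minimal face of `C` containing `S`. -/
def minFace {M : Type*} [AddCommGroup M] [Module ℝ M] (S C : Set M) : Set M :=
  ⋂₀ {F | IsFaceOf F C ∧ S ⊆ F}

/-- The nonnegative polar cone of a set `C`. -/
def polarCone {M : Type*} [NormedAddCommGroup M] [InnerProductSpace ℝ M]
    (C : Set M) : Set M :=
  {y | ∀ x ∈ C, 0 ≤ (inner ℝ y x : ℝ)}

/-!
`dir(x, C)` is a convex cone containing `C`, so `{z ∈ C | -z ∈ dir(x, C)}` is a face of `C`; it
contains `x`, hence `F = face(x, C)`, and therefore `span F` lies in the lineality space of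
`dir(x, C)`. This gives `C + span F ⊆ dir(x, C)`; conversely `v = ε⁻¹ • (x + ε • v) - ε⁻¹ • x`.
Taking polars, `(C + span F)* = C* ∩ F^⊥ = F^△`, and the bipolar theorem for the convex cone
`dir(x, C)` identifies `(F^△)*` with its closure.
-/

section Faces

variable {M : Type*} [AddCommGroup M] [Module ℝ M] {C : Set M}

lemma mem_minFace_self (x : M) : x ∈ minFace {x} C :=
  Set.mem_sInter.2 fun _ hF => hF.2 rfl

lemma minFace_subset {S F : Set M} (hF : IsFaceOf F C) (hSF : S ⊆ F) : minFace S C ⊆ F :=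
  Set.sInter_subset_of_mem ⟨hF, hSF⟩

lemma isFaceOf_setOf_neg_mem (hconv : Convex ℝ C) {D : PointedCone ℝ M} (hCD : C ⊆ D) :
    IsFaceOf {z | z ∈ C ∧ -z ∈ D} C := by
  have neg_mem_of : ∀ a b, b ∈ C → ∀ s r : ℝ, 0 < s → 0 ≤ r →
      -(s • a + r • b) ∈ D → -a ∈ D := by
    intro a b hb s r hs hr h
    have hsum := D.smul_mem (inv_nonneg.2 hs.le) (D.add_mem h (D.smul_mem hr (hCD hb)))
    rwa [neg_add, neg_add_cancel_right, smul_neg, smul_smul, inv_mul_cancel₀ hs.ne',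
      one_smul] at hsum
  refine ⟨fun z hz => hz.1, hconv.inter D.convex.neg, ?_⟩
  rintro a ha b hb t ⟨ht0, ht1⟩ ⟨-, hmem⟩
  refine ⟨⟨ha, neg_mem_of a b hb t (1 - t) ht0 (by linarith) hmem⟩,
    ⟨hb, neg_mem_of b a ha (1 - t) t (by linarith) ht0.le ?_⟩⟩
  rwa [add_comm]

end Faces

section FeasibleDirections

variable {M : Type*} [AddCommGroup M] [Module ℝ M] {C : Set M} {x : M}

/-- `dir(x, C)`. -/
def Convex.feasibleDirCone (hconv : Convex ℝ C) (hx : x ∈ C) : PointedCone ℝ M where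
  carrier := {v | ∃ ε : ℝ, 0 < ε ∧ x + ε • v ∈ C}
  zero_mem' := ⟨1, one_pos, by simpa using hx⟩
  add_mem' := by
    rintro v w ⟨ε, hε, hv⟩ ⟨δ, hδ, hw⟩
    refine ⟨ε * δ / (ε + δ), by positivity, ?_⟩
    convert hconv hv hw (a := δ / (ε + δ)) (b := ε / (ε + δ)) (by positivity) (by positivity)
      (by field_simp; ring) using 1
    match_scalars <;> field_simp
    ring
  smul_mem' := by
    rintro ⟨c, hc⟩ v ⟨ε, hε, hv⟩
    rcases hc.eq_or_lt with rfl | hc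
    · exact ⟨1, one_pos, by simpa using hx⟩
    · refine ⟨ε / c, by positivity, ?_⟩
      rwa [Nonneg.mk_smul, smul_smul, div_mul_cancel₀ ε hc.ne']

variable (hconv : Convex ℝ C) (hx : x ∈ C) (hcone : ∀ y ∈ C, ∀ t : ℝ, 0 ≤ t → t • y ∈ C)
include hconv hcone

lemma Convex.add_mem_of_smul_mem {a b : M} (ha : a ∈ C) (hb : b ∈ C) : a + b ∈ C := by
  have h := hcone _ (hconv ha hb (a := 1 / 2) (b := 1 / 2) (by norm_num) (by norm_num)
    (by norm_num)) 2 (by norm_num)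
  rwa [smul_add, smul_smul, smul_smul, show (2 : ℝ) * (1 / 2) = 1 by norm_num, one_smul,
    one_smul] at h

lemma Convex.subset_feasibleDirCone : C ⊆ hconv.feasibleDirCone hx := fun c hc =>
  ⟨1, one_pos, by simpa using hconv.add_mem_of_smul_mem hcone hx hc⟩

lemma Convex.span_minFace_le_lineal :
    Submodule.span ℝ (minFace {x} C) ≤ (hconv.feasibleDirCone hx).lineal := by
  have hxG : x ∈ {z | z ∈ C ∧ -z ∈ hconv.feasibleDirCone hx} :=
    ⟨hx, 2⁻¹, by norm_num, by
      rw [show x + (2⁻¹ : ℝ) • -x = (2⁻¹ : ℝ) • x by module]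
      exact hcone x hx 2⁻¹ (by norm_num)⟩
  refine Submodule.span_le.2 fun z hz => ?_
  obtain ⟨hzC, hz⟩ := minFace_subset (isFaceOf_setOf_neg_mem hconv
    (hconv.subset_feasibleDirCone hx hcone)) (Set.singleton_subset_iff.2 hxG) hz
  exact ⟨hconv.subset_feasibleDirCone hx hcone hzC, hz⟩

lemma Convex.coe_feasibleDirCone :
    (hconv.feasibleDirCone hx : Set M) = C + (Submodule.span ℝ (minFace {x} C) : Set M) := by
  apply subset_antisymm
  · rintro v ⟨ε, hε, hv⟩
    refine ⟨ε⁻¹ • (x + ε • v), hcone _ hv ε⁻¹ (by positivity), -ε⁻¹ • x,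
      Submodule.smul_mem _ _ (Submodule.subset_span (mem_minFace_self x)), ?_⟩
    match_scalars <;> field_simp
    ring
  · rintro _ ⟨c, hc, w, hw, rfl⟩
    exact (hconv.feasibleDirCone hx).add_mem (hconv.subset_feasibleDirCone hx hcone hc)
      ((hconv.feasibleDirCone hx).lineal_le (hconv.span_minFace_le_lineal hx hcone hw))

end FeasibleDirections

section Polar

variable {E : Type*} [NormedAddCommGroup E] [InnerProductSpace ℝ E]

lemma polarCone_add_span {C : Set E} (h0 : (0 : E) ∈ C) (S : Set E) :
    polarCone (C + (Submodule.span ℝ S : Set E)) =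
      polarCone C ∩ {y | ∀ z ∈ S, (inner ℝ y z : ℝ) = 0} := by
  ext y
  constructor
  · intro hy
    refine ⟨fun c hc => by simpa using hy (c + 0) ⟨c, hc, 0, zero_mem _, rfl⟩, fun z hz => ?_⟩
    have hzS := Submodule.subset_span (R := ℝ) hz
    have hpos := hy (0 + z) ⟨0, h0, z, hzS, rfl⟩
    have hneg := hy (0 + -z) ⟨0, h0, -z, neg_mem hzS, rfl⟩
    simp only [zero_add, inner_neg_right] at hpos hneg
    linarith
  · rintro ⟨hyC, hyS⟩ _ ⟨c, hc, w, hw, rfl⟩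
    have hyw : (inner ℝ y w : ℝ) = 0 :=
      (Submodule.span_le (p := LinearMap.ker (innerₛₗ ℝ y))).2 hyS hw
    rw [inner_add_right, hyw, add_zero]
    exact hyC c hc

variable [CompleteSpace E]

lemma polarCone_eq_innerDual (S : Set E) : polarCone S = ProperCone.innerDual S := by
  ext y
  simp only [polarCone, Set.mem_ofPred_eq, SetLike.mem_coe, ProperCone.mem_innerDual,
    real_inner_comm y]

lemma ProperCone.innerDual_closure (S : Set E) : innerDual (closure S) = innerDual S := by
  refine le_antisymm (innerDual_le_innerDual subset_closure) fun y hy z hz => ?_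
  have hcl : IsClosed {w : E | 0 ≤ (inner ℝ w y : ℝ)} :=
    isClosed_le continuous_const (continuous_id.inner continuous_const)
  exact closure_minimal (fun w hw => hy hw) hcl hz

lemma polarCone_polarCone (K : PointedCone ℝ E) :
    polarCone (polarCone K) = closure (K : Set E) := by
  rw [polarCone_eq_innerDual, polarCone_eq_innerDual, ← ProperCone.innerDual_closure (K : Set E)]
  exact congrArg SetLike.coe (ProperCone.innerDual_innerDual (Submodule.closure K))

end Polar

/-- For a convex cone `C` and `x ∈ C` with minimal face `F = face(x, C)`:
the cone of feasible directions satisfies `dir(x, C) = C + span F`, and the tangent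
cone satisfies `tcone(x, C) = (F^△)*`, where `F^△ = C* ∩ F^⊥`. -/
theorem dir_and_tangent_cone
    {E : Type*} [NormedAddCommGroup E] [InnerProductSpace ℝ E]
    [FiniteDimensional ℝ E]
    (C : Set E) (hconv : Convex ℝ C) (hcone : ∀ y ∈ C, ∀ t : ℝ, 0 ≤ t → t • y ∈ C)
    (x : E) (hx : x ∈ C) :
    ({v : E | ∃ ε : ℝ, 0 < ε ∧ x + ε • v ∈ C}
        = C + (Submodule.span ℝ (minFace {x} C) : Set E)) ∧
    (closure {v : E | ∃ ε : ℝ, 0 < ε ∧ x + ε • v ∈ C}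
        = polarCone (polarCone C ∩
            {y : E | ∀ z ∈ minFace {x} C, (inner ℝ y z : ℝ) = 0})) := by
  have : CompleteSpace E := FiniteDimensional.complete ℝ E
  have hdir := hconv.coe_feasibleDirCone hx hcone
  have h0 : (0 : E) ∈ C := by simpa using hcone x hx 0 le_rfl
  refine ⟨hdir, ?_⟩
  rw [← polarCone_add_span h0, ← hdir, polarCone_polarCone]
  rfl
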